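/- For the affine symplectic group action on functions on ℝ², the derivations ∇₁' = (u_xu_{yy} − u_yu_{xy})D_x − (u_xu_{xy} − u_yu_{xx})D_y and ∇₂ = u_x D_y − u_y D_x satisfy the commutator relation [∇₁', ∇₂] = −(∇₂(I_{2c})/I_{2c})∇₁' + (∇₁'(I_{2c})/I_{2c} − 2I₂')∇₂, where I₂' = u_{xx}u_{yy} − u_{xy}² (the Hessian) and I_{2c} = u_x²u_{yy} − 2u_xu_yu_{xy} + u_y²u_{xx}. -/

import Mathlib

open Matrix

noncomputable section

/-- Coordinates on `J³ℝ²`: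
`(x, y, u, u_x, u_y, u_xx, u_xy, u_yy, u_xxx, u_xxy, u_xyy, u_yyy)`. -/
def Dx (F : (Fin 12 → ℝ) → ℝ) : (Fin 12 → ℝ) → ℝ := fun p =>
  fderiv ℝ F p ![1, 0, p 3, p 5, p 6, p 8, p 9, p 10, 0, 0, 0, 0]

def Dy (F : (Fin 12 → ℝ) → ℝ) : (Fin 12 → ℝ) → ℝ := fun p =>
  fderiv ℝ F p ![0, 1, p 4, p 6, p 7, p 9, p 10, p 11, 0, 0, 0, 0]

/-- `D_x`-coefficient of `∇₁' = (u_xu_yy − u_yu_xy)D_x − (u_xu_xy − u_yu_xx)D_y`. -/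
def A1 : (Fin 12 → ℝ) → ℝ := fun p => p 3 * p 7 - p 4 * p 6
/-- `D_y`-coefficient of `∇₁'`. -/
def B1 : (Fin 12 → ℝ) → ℝ := fun p => -(p 3 * p 6 - p 4 * p 5)
/-- `D_x`-coefficient of `∇₂ = u_x D_y − u_y D_x`. -/
def A2 : (Fin 12 → ℝ) → ℝ := fun p => -(p 4)
/-- `D_y`-coefficient of `∇₂`. -/
def B2 : (Fin 12 → ℝ) → ℝ := fun p => p 3

/-- `∇₁'`. -/
def Nabla1' (F : (Fin 12 → ℝ) → ℝ) : (Fin 12 → ℝ) → ℝ := fun p =>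
  A1 p * Dx F p + B1 p * Dy F p

/-- `∇₂`. -/
def Nabla2 (F : (Fin 12 → ℝ) → ℝ) : (Fin 12 → ℝ) → ℝ := fun p =>
  A2 p * Dx F p + B2 p * Dy F p

/-- The Hessian `I₂' = u_xx u_yy − u_xy²`. -/
def I2' : (Fin 12 → ℝ) → ℝ := fun p => p 5 * p 7 - (p 6) ^ 2

def I2c : (Fin 12 → ℝ) → ℝ := fun p =>
  (p 3) ^ 2 * p 7 - 2 * p 3 * p 4 * p 6 + (p 4) ^ 2 * p 5

/-! The coefficients of `∇₁'`, `∇₂` and `I_{2c}` are polynomials in the 2-jet coordinates, so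
their total derivatives follow from the Leibniz rule. Substituting these, both components of the
commutator identity become polynomial identities in the 3-jet coordinates. -/

theorem fderiv_apply_coord {ι : Type*} [Fintype ι] (i : ι) (p v : ι → ℝ) :
    fderiv ℝ (fun q : ι → ℝ => q i) p v = v i := by
  rw [(hasFDerivAt_apply i p).fderiv]
  rfl

theorem fderiv_A1_apply (p v : Fin 12 → ℝ) :
    fderiv ℝ A1 p v = v 3 * p 7 + p 3 * v 7 - (v 4 * p 6 + p 4 * v 6) := by
  unfold A1
  simp (disch := fun_prop) only [fderiv_fun_sub, fderiv_fun_mul, _root_.add_apply,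
    _root_.sub_apply, _root_.smul_apply, smul_eq_mul, fderiv_apply_coord]
  ring

theorem fderiv_B1_apply (p v : Fin 12 → ℝ) :
    fderiv ℝ B1 p v = -(v 3 * p 6 + p 3 * v 6 - (v 4 * p 5 + p 4 * v 5)) := by
  unfold B1
  simp (disch := fun_prop) only [fderiv_fun_neg, fderiv_fun_sub, fderiv_fun_mul, _root_.neg_apply,
    _root_.add_apply, _root_.sub_apply, _root_.smul_apply, smul_eq_mul, fderiv_apply_coord]
  ring

theorem fderiv_A2_apply (p v : Fin 12 → ℝ) : fderiv ℝ A2 p v = -v 4 := by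
  unfold A2
  simp [fderiv_apply_coord]

theorem fderiv_B2_apply (p v : Fin 12 → ℝ) : fderiv ℝ B2 p v = v 3 :=
  fderiv_apply_coord 3 p v

theorem fderiv_I2c_apply (p v : Fin 12 → ℝ) :
    fderiv ℝ I2c p v = 2 * p 3 * v 3 * p 7 + p 3 ^ 2 * v 7
      - 2 * (v 3 * p 4 * p 6 + p 3 * v 4 * p 6 + p 3 * p 4 * v 6)
      + (2 * p 4 * v 4 * p 5 + p 4 ^ 2 * v 5) := by
  unfold I2c
  simp (disch := fun_prop) only [fderiv_fun_add, fderiv_fun_sub, fderiv_fun_mul, fderiv_fun_pow,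
    fderiv_fun_const, Pi.zero_apply, _root_.zero_apply, _root_.add_apply, _root_.sub_apply,
    _root_.smul_apply, smul_eq_mul, fderiv_apply_coord]
  ring

/-- `[∇₁', ∇₂] = −(∇₂(I_{2c})/I_{2c})∇₁' + (∇₁'(I_{2c})/I_{2c} − 2I₂')∇₂`,
as a polynomial identity after clearing the denominator `I_{2c}`, componentwise
in the coefficients of `D_x` and `D_y`, where
`[∇,∇'] = (∇(a') − ∇'(a))D_x + (∇(b') − ∇'(b))D_y`. -/
theorem stmt_14 : ∀ p : Fin 12 → ℝ,
    I2c p * (Nabla1' A2 p - Nabla2 A1 p)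
      = -(Nabla2 I2c p) * A1 p + (Nabla1' I2c p - 2 * I2' p * I2c p) * A2 p ∧
    I2c p * (Nabla1' B2 p - Nabla2 B1 p)
      = -(Nabla2 I2c p) * B1 p + (Nabla1' I2c p - 2 * I2' p * I2c p) * B2 p := by
  intro p
  simp only [Nabla1', Nabla2, Dx, Dy, fderiv_A1_apply, fderiv_B1_apply, fderiv_A2_apply,
    fderiv_B2_apply, fderiv_I2c_apply]
  simp only [A1, B1, A2, B2, I2', I2c, cons_val]
  constructor <;> ring
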